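/- arXiv:2208.05084 — 3 statements merged into one kernel-verified Lean document; each statement's English description precedes it below -/
import Mathlib

section
/- For every x ∈ L_{2,∞}(0,1), the function Tx defined by (Tx)(t) = t^{-1/2} ∫_0^t x(s) ds + ∫_t^1 x(s) s^{-1/2} ds satisfies |(Tx)(t)| ≤ ‖x‖_{2,∞} · log(e²/t) for all t ∈ (0,1). -/
open MeasureTheory Set

noncomputable def nu : Measure ℝ := volume.restrict (Set.Ioo 0 1)

/-- Decreasing rearrangement of a function on `(0,1)`. -/
noncomputable def mu (f : ℝ → ℝ) (t : ℝ) : ℝ :=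
  sInf {s : ℝ | 0 ≤ s ∧ nu {u | s < |f u|} ≤ ENNReal.ofReal t}

/-- `(Tx)(t) = t^{-1/2} ∫_0^t x(s) ds + ∫_t^1 x(s) s^{-1/2} ds`. -/
noncomputable def T (x : ℝ → ℝ) (t : ℝ) : ℝ :=
  t ^ (-(1:ℝ)/2) * (∫ s in Set.Ioc (0:ℝ) t, x s) + ∫ s in Set.Ioc t (1:ℝ), x s * s ^ (-(1:ℝ)/2)

/-- The Lorentz `L_{2,∞}` (quasi-)norm on `(0,1)`: `sup_{t>0} t^{1/2} μ(t,x)`. -/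
noncomputable def norm2inf (x : ℝ → ℝ) : ℝ :=
  sSup {r : ℝ | ∃ t > (0:ℝ), r = Real.sqrt t * mu x t}

/-!
On `(0,1)` the operator has the kernel `K(t,s) = min(t^{-1/2}, s^{-1/2})`, so
`|Tx(t)| ≤ ∫₀¹ K(t,s) |x(s)| ds`. Finiteness of `‖x‖_{2,∞}` gives the tail bound
`|{|x| > l}| ≤ min(1, ‖x‖²/l²) = |{h > l}|` with `h(s) = ‖x‖ s^{-1/2}`. As `K(t,·)` decreases,
the bathtub principle bounds `∫_{|x| > l} K` by `∫_{h > l} K`, the integral over an initial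
segment; integrating in `l` (layer cake) gives
`∫₀¹ K(t,s) |x(s)| ds ≤ ‖x‖ ∫₀¹ K(t,s) s^{-1/2} ds = ‖x‖ log(e²/t)`.
-/

open scoped ENNReal

instance : IsProbabilityMeasure nu := ⟨by simp [nu]⟩

lemma exists_nat_measure_lt_le {α : Type*} [MeasurableSpace α] (μ : Measure α)
    [IsFiniteMeasure μ] {f : α → ℝ} (hf : Measurable f) {ε : ℝ≥0∞} (hε : 0 < ε) :
    ∃ n : ℕ, μ {a | (n : ℝ) < f a} ≤ ε := by
  have hanti : Antitone fun n : ℕ => {a | (n : ℝ) < f a} :=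
    fun m n hmn a (ha : (n : ℝ) < f a) => show (m : ℝ) < f a from (Nat.cast_le.mpr hmn).trans_lt ha
  have hempty : ⋂ n : ℕ, {a | (n : ℝ) < f a} = ∅ :=
    iInter_eq_empty_iff.mpr fun a => (exists_nat_ge (f a)).imp fun _ hn => hn.not_gt
  have hlim := tendsto_measure_iInter_atTop (μ := μ)
    (fun _ => (measurableSet_lt measurable_const hf).nullMeasurableSet) hanti
    ⟨0, measure_ne_top _ _⟩
  rw [hempty, measure_empty] at hlim
  exact (hlim.eventually_le_const hε).exists

lemma mu_nonneg (x : ℝ → ℝ) (t : ℝ) : 0 ≤ mu x t :=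
  Real.sInf_nonneg fun _ hs => hs.1

section Rearrangement

variable {x : ℝ → ℝ}

lemma nu_lt_abs_le_of_mu_lt (hx : Measurable x) {t l : ℝ} (ht : 0 < t) (hl : mu x t < l) :
    nu {u | l < |x u|} ≤ ENNReal.ofReal t := by
  obtain ⟨n, hn⟩ := exists_nat_measure_lt_le nu hx.abs (ENNReal.ofReal_pos.mpr ht)
  have hne : {s : ℝ | 0 ≤ s ∧ nu {u | s < |x u|} ≤ ENNReal.ofReal t}.Nonempty :=
    ⟨n, n.cast_nonneg, hn⟩
  obtain ⟨s, ⟨-, hs⟩, hsl⟩ := (csInf_lt_iff ⟨0, fun _ hs => hs.1⟩ hne).mp hl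
  exact (measure_mono fun u (hu : l < |x u|) => hsl.trans hu).trans hs

variable (hbdd : BddAbove {r : ℝ | ∃ t > (0:ℝ), r = Real.sqrt t * mu x t})
include hbdd

lemma sqrt_mul_mu_le_norm2inf {t : ℝ} (ht : 0 < t) : √t * mu x t ≤ norm2inf x :=
  le_csSup hbdd ⟨t, ht, rfl⟩

lemma norm2inf_nonneg : 0 ≤ norm2inf x :=
  (mul_nonneg (Real.sqrt_nonneg 1) (mu_nonneg x 1)).trans (sqrt_mul_mu_le_norm2inf hbdd one_pos)

lemma nu_lt_abs_le_norm2inf_div_sq (hx : Measurable x) {l : ℝ} (hl : 0 < l) :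
    nu {u | l < |x u|} ≤ ENNReal.ofReal ((norm2inf x / l) ^ 2) := by
  -- `mu x t < l` is only guaranteed for `t > (‖x‖/l)²`, so let `t` decrease to `(‖x‖/l)²`.
  refine ge_of_tendsto
    (ENNReal.continuous_ofReal.continuousWithinAt (s := Ioi ((norm2inf x / l) ^ 2))).tendsto ?_
  filter_upwards [self_mem_nhdsWithin] with t (ht : (norm2inf x / l) ^ 2 < t)
  have ht0 : 0 < t := (sq_nonneg _).trans_lt ht
  have hsqrt : norm2inf x / l < √t :=
    (Real.lt_sqrt (div_nonneg (norm2inf_nonneg hbdd) hl.le)).mpr ht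
  refine nu_lt_abs_le_of_mu_lt hx ht0 (lt_of_mul_lt_mul_left ?_ (Real.sqrt_nonneg t))
  exact (sqrt_mul_mu_le_norm2inf hbdd ht0).trans_lt (by rwa [div_lt_iff₀ hl] at hsqrt)

end Rearrangement

lemma setLIntegral_le_setLIntegral_Ioo_of_antitoneOn {g : ℝ → ℝ≥0∞} (hg : AntitoneOn g (Ioi 0))
    {E : Set ℝ} (hE : MeasurableSet E) (hE0 : E ⊆ Ioi 0) {m : ℝ}
    (hEm : volume E ≤ volume (Ioo 0 m)) :
    ∫⁻ s in E, g s ≤ ∫⁻ s in Ioo 0 m, g s := by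
  set M := Ioo (0:ℝ) m
  have hM : MeasurableSet M := measurableSet_Ioo
  have hvol : volume (E \ M) ≤ volume (M \ E) := by
    have hfin : volume (E ∩ M) ≠ ∞ :=
      ((measure_mono inter_subset_right).trans_lt measure_Ioo_lt_top).ne
    rwa [← ENNReal.add_le_add_iff_left hfin, measure_inter_add_sdiff _ hM, inter_comm,
      measure_inter_add_sdiff _ hE]
  have hsup_le_inf : ⨆ s ∈ E \ M, g s ≤ ⨅ s ∈ M \ E, g s :=
    iSup₂_le fun a ha => le_iInf₂ fun b hb =>
      hg hb.1.1 (hE0 ha.1) (hb.1.2.le.trans (not_lt.mp fun h => ha.2 ⟨hE0 ha.1, h⟩))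
  rw [← lintegral_inter_add_sdiff g E hM, ← lintegral_inter_add_sdiff g M hE, inter_comm M E]
  refine add_le_add le_rfl ?_
  calc ∫⁻ s in E \ M, g s ≤ (⨆ s ∈ E \ M, g s) * volume (E \ M) :=
        setLIntegral_le_iSup_mul g (hE.diff hM)
    _ ≤ (⨅ s ∈ M \ E, g s) * volume (M \ E) := by gcongr
    _ ≤ ∫⁻ s in M \ E, g s := iInf_mul_le_setLIntegral g (hM.diff hE)

lemma lt_mul_rpow_neg_half_iff {N l s : ℝ} (hN : 0 ≤ N) (hl : 0 < l) (hs : 0 < s) :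
    l < N * s ^ (-(1:ℝ)/2) ↔ s < (N / l) ^ 2 := by
  have hsqrt : s ^ (-(1:ℝ)/2) = (√s)⁻¹ := by
    rw [neg_div, Real.rpow_neg hs.le, Real.sqrt_eq_rpow, one_div]
  rw [hsqrt, ← Real.sqrt_lt hs.le (div_nonneg hN hl.le), lt_div_iff₀' hl,
    lt_mul_inv_iff₀ (Real.sqrt_pos.mpr hs), mul_comm]

noncomputable def Tkernel (t s : ℝ) : ℝ := min (t ^ (-(1:ℝ)/2)) (s ^ (-(1:ℝ)/2))

lemma measurable_Tkernel (t : ℝ) : Measurable (Tkernel t) :=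
  measurable_const.min (by fun_prop)

lemma Tkernel_antitoneOn (t : ℝ) : AntitoneOn (Tkernel t) (Ioi 0) := fun _ ha _ _ hab =>
  min_le_min le_rfl (Real.rpow_le_rpow_of_nonpos ha hab (by norm_num))

lemma Tkernel_nonneg {t s : ℝ} (ht : 0 < t) (hs : 0 < s) : 0 ≤ Tkernel t s :=
  le_min (Real.rpow_nonneg ht.le _) (Real.rpow_nonneg hs.le _)

lemma Tkernel_of_le {t s : ℝ} (hs : 0 < s) (hst : s ≤ t) : Tkernel t s = t ^ (-(1:ℝ)/2) :=
  min_eq_left (Real.rpow_le_rpow_of_nonpos hs hst (by norm_num))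

lemma Tkernel_of_ge {t s : ℝ} (ht : 0 < t) (hts : t ≤ s) : Tkernel t s = s ^ (-(1:ℝ)/2) :=
  min_eq_right (Real.rpow_le_rpow_of_nonpos ht hts (by norm_num))

lemma setLIntegral_Ioc_ofReal_eq_intervalIntegral {f : ℝ → ℝ} {a b : ℝ} (hab : a ≤ b)
    (hf : IntervalIntegrable f volume a b) (hf0 : ∀ s ∈ Ioc a b, 0 ≤ f s) :
    ∫⁻ s in Ioc a b, ENNReal.ofReal (f s) = ENNReal.ofReal (∫ s in a..b, f s) := by
  rw [intervalIntegral.integral_of_le hab, ofReal_integral_eq_lintegral_ofReal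
    ((intervalIntegrable_iff_integrableOn_Ioc_of_le hab).mp hf)
    ((ae_restrict_iff' measurableSet_Ioc).mpr (ae_of_all _ hf0))]

lemma lintegral_Tkernel_mul_rpow {t : ℝ} (ht : 0 < t) (ht1 : t ≤ 1) :
    ∫⁻ s in Ioo 0 1, ENNReal.ofReal (Tkernel t s * s ^ (-(1:ℝ)/2))
      = ENNReal.ofReal (Real.log (Real.exp 1 ^ 2 / t)) := by
  have hleft : ∫⁻ s in Ioc 0 t, ENNReal.ofReal (Tkernel t s * s ^ (-(1:ℝ)/2))
      = ENNReal.ofReal 2 := by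
    rw [setLIntegral_congr_fun (g := fun s => ENNReal.ofReal (t ^ (-(1:ℝ)/2) * s ^ (-(1:ℝ)/2)))
        measurableSet_Ioc fun s hs => by rw [Tkernel_of_le hs.1 hs.2],
      setLIntegral_Ioc_ofReal_eq_intervalIntegral ht.le
        ((intervalIntegral.intervalIntegrable_rpow' (by norm_num)).const_mul _)
        fun s hs => mul_nonneg (Real.rpow_nonneg ht.le _) (Real.rpow_nonneg hs.1.le _),
      intervalIntegral.integral_const_mul, integral_rpow (Or.inl (by norm_num)),
      Real.zero_rpow (by norm_num), sub_zero, mul_div_assoc', ← Real.rpow_add ht]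
    norm_num
  have hright : ∫⁻ s in Ioc t 1, ENNReal.ofReal (Tkernel t s * s ^ (-(1:ℝ)/2))
      = ENNReal.ofReal (-Real.log t) := by
    rw [setLIntegral_congr_fun (g := fun s => ENNReal.ofReal s⁻¹) measurableSet_Ioc
        fun s hs => by
          change _ = ENNReal.ofReal s⁻¹
          rw [Tkernel_of_ge ht hs.1.le, ← Real.rpow_add (ht.trans hs.1), ← Real.rpow_neg_one]
          norm_num,
      setLIntegral_Ioc_ofReal_eq_intervalIntegral ht1
        (intervalIntegrable_inv_iff.mpr (Or.inr (notMem_uIcc_of_lt ht one_pos)))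
        fun s hs => inv_nonneg.mpr (ht.trans hs.1).le,
      integral_inv_of_pos ht one_pos, one_div, Real.log_inv]
  rw [setLIntegral_congr Ioo_ae_eq_Ioc, ← Ioc_union_Ioc_eq_Ioc ht.le ht1,
    lintegral_union measurableSet_Ioc (Ioc_disjoint_Ioc_of_le le_rfl), hleft, hright,
    ← ENNReal.ofReal_add zero_le_two (neg_nonneg.mpr (Real.log_nonpos ht.le ht1)),
    Real.log_div (by positivity) ht.ne', Real.log_pow, Real.log_exp]
  ring_nf

lemma nu_withDensity_lt_abs_le {x : ℝ → ℝ} (hx : Measurable x) {G : ℝ → ℝ≥0∞}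
    (hG : AntitoneOn G (Ioi 0)) {N l : ℝ} (hN : 0 ≤ N) (hl : 0 < l)
    (htail : nu {u | l < |x u|} ≤ ENNReal.ofReal ((N / l) ^ 2)) :
    nu.withDensity G {u | l < |x u|} ≤ nu.withDensity G {s | l < N * s ^ (-(1:ℝ)/2)} := by
  have hA : MeasurableSet {u | l < |x u|} := measurableSet_lt measurable_const hx.abs
  have hset : {s : ℝ | l < N * s ^ (-(1:ℝ)/2)} ∩ Ioo 0 1 = Ioo 0 (min 1 ((N / l) ^ 2)) := by
    ext s
    simp only [mem_inter_iff, mem_ofPred_eq, mem_Ioo, lt_min_iff]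
    constructor
    · rintro ⟨h, hs0, hs1⟩
      exact ⟨hs0, hs1, (lt_mul_rpow_neg_half_iff hN hl hs0).mp h⟩
    · rintro ⟨hs0, hs1, h⟩
      exact ⟨(lt_mul_rpow_neg_half_iff hN hl hs0).mpr h, hs0, hs1⟩
  rw [withDensity_apply _ hA, withDensity_apply', nu, Measure.restrict_restrict hA,
    Measure.restrict_restrict' measurableSet_Ioo, hset]
  refine setLIntegral_le_setLIntegral_Ioo_of_antitoneOn hG (hA.inter measurableSet_Ioo)
    (inter_subset_right.trans Ioo_subset_Ioi_self) ?_
  rw [Real.volume_Ioo, sub_zero, ← Measure.restrict_apply hA, ENNReal.ofReal_min,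
    ENNReal.ofReal_one]
  exact le_min (prob_le_one (μ := nu)) htail

lemma lintegral_Tkernel_mul_abs_le {x : ℝ → ℝ} (hx : Measurable x)
    (hbdd : BddAbove {r : ℝ | ∃ t > (0:ℝ), r = Real.sqrt t * mu x t}) {t : ℝ} (ht : 0 < t)
    (ht1 : t ≤ 1) :
    ∫⁻ s, ENNReal.ofReal (Tkernel t s) * ENNReal.ofReal |x s| ∂nu
      ≤ ENNReal.ofReal (norm2inf x * Real.log (Real.exp 1 ^ 2 / t)) := by
  set N := norm2inf x
  have hN : 0 ≤ N := norm2inf_nonneg hbdd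
  set G : ℝ → ℝ≥0∞ := fun s => ENNReal.ofReal (Tkernel t s)
  have hGm : Measurable G := (measurable_Tkernel t).ennreal_ofReal
  have hG : AntitoneOn G (Ioi 0) := fun _ ha _ hb hab =>
    ENNReal.ofReal_le_ofReal (Tkernel_antitoneOn t ha hb hab)
  have hh : Measurable fun s : ℝ => N * s ^ (-(1:ℝ)/2) := by fun_prop
  have hmem : ∀ᵐ s ∂nu, s ∈ Ioo (0:ℝ) 1 := ae_restrict_mem measurableSet_Ioo
  have hh0 : 0 ≤ᵐ[nu.withDensity G] fun s => N * s ^ (-(1:ℝ)/2) :=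
    (withDensity_absolutelyContinuous nu G).ae_le <| hmem.mono fun s hs =>
      mul_nonneg hN (Real.rpow_nonneg hs.1.le _)
  calc ∫⁻ s, G s * ENNReal.ofReal |x s| ∂nu
      = ∫⁻ s, ENNReal.ofReal |x s| ∂nu.withDensity G :=
        (lintegral_withDensity_eq_lintegral_mul _ hGm hx.abs.ennreal_ofReal).symm
    _ = ∫⁻ l in Ioi 0, nu.withDensity G {u | l < |x u|} :=
        lintegral_eq_lintegral_meas_lt _ (ae_of_all _ fun _ => abs_nonneg _) hx.abs.aemeasurable
    _ ≤ ∫⁻ l in Ioi 0, nu.withDensity G {s | l < N * s ^ (-(1:ℝ)/2)} :=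
        setLIntegral_mono' measurableSet_Ioi fun _ hl =>
          nu_withDensity_lt_abs_le hx hG hN hl (nu_lt_abs_le_norm2inf_div_sq hbdd hx hl)
    _ = ∫⁻ s, ENNReal.ofReal (N * s ^ (-(1:ℝ)/2)) ∂nu.withDensity G :=
        (lintegral_eq_lintegral_meas_lt _ hh0 hh.aemeasurable).symm
    _ = ∫⁻ s, G s * ENNReal.ofReal (N * s ^ (-(1:ℝ)/2)) ∂nu :=
        lintegral_withDensity_eq_lintegral_mul _ hGm hh.ennreal_ofReal
    _ = ∫⁻ s, ENNReal.ofReal N * ENNReal.ofReal (Tkernel t s * s ^ (-(1:ℝ)/2)) ∂nu := by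
        refine lintegral_congr_ae (hmem.mono fun s hs => ?_)
        dsimp only [G]
        rw [ENNReal.ofReal_mul hN, ENNReal.ofReal_mul (Tkernel_nonneg ht hs.1), mul_left_comm]
    _ = ENNReal.ofReal (N * Real.log (Real.exp 1 ^ 2 / t)) := by
        rw [lintegral_const_mul _ (f := fun s => ENNReal.ofReal (Tkernel t s * s ^ (-(1:ℝ)/2)))
            ((measurable_Tkernel t).mul (by fun_prop)).ennreal_ofReal,
          nu, lintegral_Tkernel_mul_rpow ht ht1, ENNReal.ofReal_mul hN]

lemma enorm_T_le (x : ℝ → ℝ) {t : ℝ} (ht : 0 < t) (ht1 : t ≤ 1) :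
    ‖T x t‖ₑ ≤ ∫⁻ s, ENNReal.ofReal (Tkernel t s) * ENNReal.ofReal |x s| ∂nu := by
  have hleft : ‖t ^ (-(1:ℝ)/2) * ∫ s in Ioc 0 t, x s‖ₑ
      ≤ ∫⁻ s in Ioc 0 t, ENNReal.ofReal (Tkernel t s) * ENNReal.ofReal |x s| := by
    rw [setLIntegral_congr_fun
        (g := fun s => ENNReal.ofReal (t ^ (-(1:ℝ)/2)) * ENNReal.ofReal |x s|)
        measurableSet_Ioc fun s hs => by rw [Tkernel_of_le hs.1 hs.2],
      lintegral_const_mul' _ _ ENNReal.ofReal_ne_top, enorm_mul,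
      Real.enorm_of_nonneg (Real.rpow_nonneg ht.le _)]
    gcongr
    simpa only [Real.enorm_eq_ofReal_abs] using enorm_integral_le_lintegral_enorm x
  have hright : ‖∫ s in Ioc t 1, x s * s ^ (-(1:ℝ)/2)‖ₑ
      ≤ ∫⁻ s in Ioc t 1, ENNReal.ofReal (Tkernel t s) * ENNReal.ofReal |x s| := by
    refine (enorm_integral_le_lintegral_enorm _).trans_eq
      (setLIntegral_congr_fun measurableSet_Ioc fun s hs => ?_)
    rw [Tkernel_of_ge ht hs.1.le, enorm_mul, Real.enorm_of_nonneg
      (Real.rpow_nonneg (ht.trans hs.1).le _), Real.enorm_eq_ofReal_abs, mul_comm]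
  calc ‖T x t‖ₑ
      ≤ ‖t ^ (-(1:ℝ)/2) * ∫ s in Ioc 0 t, x s‖ₑ + ‖∫ s in Ioc t 1, x s * s ^ (-(1:ℝ)/2)‖ₑ :=
        enorm_add_le _ _
    _ ≤ ∫⁻ s in Ioc 0 1, ENNReal.ofReal (Tkernel t s) * ENNReal.ofReal |x s| := by
        rw [← Ioc_union_Ioc_eq_Ioc ht.le ht1,
          lintegral_union measurableSet_Ioc (Ioc_disjoint_Ioc_of_le le_rfl)]
        exact add_le_add hleft hright
    _ = ∫⁻ s, ENNReal.ofReal (Tkernel t s) * ENNReal.ofReal |x s| ∂nu :=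
        setLIntegral_congr Ioo_ae_eq_Ioc.symm

/-- For `x ∈ L_{2,∞}(0,1)`, `|(Tx)(t)| ≤ ‖x‖_{2,∞} · log(e²/t)` for all `t ∈ (0,1)`. -/
theorem stmt2 (x : ℝ → ℝ) (hx : Measurable x)
    (hbdd : BddAbove {r : ℝ | ∃ t > (0:ℝ), r = Real.sqrt t * mu x t}) :
    ∀ t ∈ Set.Ioo (0:ℝ) 1,
      |T x t| ≤ norm2inf x * Real.log (Real.exp 1 ^ 2 / t) := by
  rintro t ⟨ht0, ht1⟩
  have hlog : 0 ≤ Real.log (Real.exp 1 ^ 2 / t) := by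
    refine Real.log_nonneg ((le_div_iff₀ ht0).mpr ?_)
    nlinarith [Real.add_one_le_exp 1]
  rw [← ENNReal.ofReal_le_ofReal_iff (mul_nonneg (norm2inf_nonneg hbdd) hlog),
    ← Real.enorm_eq_ofReal_abs]
  exact (enorm_T_le x ht0 ht1.le).trans (lintegral_Tkernel_mul_abs_le hx hbdd ht0 ht1.le)
end

section
/- Let ψ(t) = 1/log(e/t) on (0,1). Let y ∈ L_2((0,1), dt/t) be positive and increasing, and set x(t) = t^{-1/2} y(t). Then for all t ∈ (0,1), ψ(t)·(Tx)(t) ≥ (1/(4e))·y(t/2), where (Tx)(t) = t^{-1/2}∫_0^t x(s)ds + ∫_t^1 x(s)s^{-1/2}ds. -/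
/- For small t the second term of T dominates: since y increases, ∫_t^1 y(s) ds/s ≥ y(t) log(1/t),
and ψ(t) log(1/t) ≥ 1/2 once t ≤ 1/e. For t ≥ 1/e we have ψ(t) ≥ 1/2 and the first term
suffices: t^{-1/2} ∫_{t/2}^t s^{-1/2} y(s) ds ≥ t^{-1} (t/2) y(t/2) = y(t/2)/2. Both integrals
are finite: near 0 the integrand is dominated by y(t) s^{-1/2}, and on (t,1) we have
y(s)/s ≤ y(s)²/(s y(t)). -/

open MeasureTheory Set

/-- `ψ(t) = 1/log(e/t)`. -/
noncomputable def psi (t : ℝ) : ℝ := 1 / Real.log (Real.exp 1 / t)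

open Real

lemma rpow_neg_half_mul_rpow_neg_half {s : ℝ} (hs : 0 < s) :
    s ^ (-(1:ℝ)/2) * s ^ (-(1:ℝ)/2) = s⁻¹ := by
  rw [← rpow_add hs]
  norm_num [rpow_neg_one]

lemma psi_eq {t : ℝ} (ht : 0 < t) : psi t = 1 / (1 - log t) := by
  rw [psi, log_div (exp_ne_zero 1) ht.ne', log_exp]

lemma psi_pos {t : ℝ} (ht0 : 0 < t) (ht1 : t ≤ 1) : 0 < psi t := by
  rw [psi_eq ht0]
  exact one_div_pos.2 (by linarith [log_nonpos ht0.le ht1])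

lemma half_le_psi {t : ℝ} (ht : exp (-1) ≤ t) (ht1 : t < 1) : 1 / 2 ≤ psi t := by
  have ht0 : 0 < t := (exp_pos _).trans_le ht
  have hlog : -1 ≤ log t := by rwa [le_log_iff_exp_le ht0]
  rw [psi_eq ht0]
  exact one_div_le_one_div_of_le (by linarith [log_neg ht0 ht1]) (by linarith)

lemma half_le_psi_mul_neg_log {t : ℝ} (ht0 : 0 < t) (ht : t ≤ exp (-1)) :
    1 / 2 ≤ psi t * -log t := by
  have hlog : log t ≤ -1 := by rwa [log_le_iff_le_exp ht0]
  rw [psi_eq ht0, one_div_mul_eq_div, le_div_iff₀ (by linarith)]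
  linarith

lemma T_rpow_neg_half_mul (y : ℝ → ℝ) {t : ℝ} (ht : 0 ≤ t) :
    T (fun s => s ^ (-(1:ℝ)/2) * y s) t =
      t ^ (-(1:ℝ)/2) * (∫ s in Ioc 0 t, s ^ (-(1:ℝ)/2) * y s) + ∫ s in Ioo t 1, y s / s := by
  rw [T]
  congr 1
  rw [integral_Ioc_eq_integral_Ioo]
  refine setIntegral_congr_fun measurableSet_Ioo fun s hs => ?_
  rw [mul_right_comm, rpow_neg_half_mul_rpow_neg_half (ht.trans_lt hs.1), div_eq_inv_mul]

section Monotone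

variable {y : ℝ → ℝ} {t : ℝ}

lemma integrableOn_rpow_neg_half_mul_Ioc (ht : 0 < t) (hpos : ∀ s ∈ Ioc 0 t, 0 ≤ y s)
    (hmono : MonotoneOn y (Ioc 0 t)) :
    IntegrableOn (fun s => s ^ (-(1:ℝ)/2) * y s) (Ioc 0 t) := by
  have hdom : IntegrableOn (fun s : ℝ => y t * s ^ (-(1:ℝ)/2)) (Ioc 0 t) :=
    ((intervalIntegral.intervalIntegrable_rpow' (by norm_num)).1).const_mul _
  refine hdom.mono' ((measurable_id.pow_const _).aestronglyMeasurable.mul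
    (aemeasurable_restrict_of_monotoneOn measurableSet_Ioc hmono).aestronglyMeasurable) ?_
  filter_upwards [ae_restrict_mem measurableSet_Ioc] with s hs
  rw [norm_of_nonneg (mul_nonneg (rpow_nonneg hs.1.le _) (hpos s hs)), mul_comm]
  exact mul_le_mul_of_nonneg_right (hmono hs ⟨ht, le_rfl⟩ hs.2) (rpow_nonneg hs.1.le _)

lemma half_le_rpow_neg_half_mul_integral (ht : 0 < t) (hpos : ∀ s ∈ Ioc 0 t, 0 ≤ y s)
    (hmono : MonotoneOn y (Ioc 0 t)) :
    y (t / 2) / 2 ≤ t ^ (-(1:ℝ)/2) * ∫ s in Ioc 0 t, s ^ (-(1:ℝ)/2) * y s := by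
  have hint := integrableOn_rpow_neg_half_mul_Ioc ht hpos hmono
  have hsub : Ioc (t / 2) t ⊆ Ioc 0 t := Ioc_subset_Ioc_left (by linarith)
  have hlower : ∀ s ∈ Ioc (t / 2) t, t ^ (-(1:ℝ)/2) * y (t / 2) ≤ s ^ (-(1:ℝ)/2) * y s :=
    fun s hs => mul_le_mul (rpow_le_rpow_of_nonpos (by linarith [hs.1]) hs.2 (by norm_num))
      (hmono ⟨by linarith, by linarith⟩ (hsub hs) hs.1.le) (hpos _ ⟨by linarith, by linarith⟩)
      (rpow_nonneg (by linarith [hs.1]) _)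
  have hhalf : t ^ (-(1:ℝ)/2) * y (t / 2) * (t / 2) ≤ ∫ s in Ioc 0 t, s ^ (-(1:ℝ)/2) * y s :=
    calc t ^ (-(1:ℝ)/2) * y (t / 2) * (t / 2)
        = t ^ (-(1:ℝ)/2) * y (t / 2) * volume.real (Ioc (t / 2) t) := by
          rw [Real.volume_real_Ioc_of_le (by linarith)]; ring
      _ ≤ ∫ s in Ioc (t / 2) t, s ^ (-(1:ℝ)/2) * y s :=
          setIntegral_ge_of_const_le_real measurableSet_Ioc measure_Ioc_lt_top.ne hlower
            (hint.mono_set hsub)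
      _ ≤ ∫ s in Ioc 0 t, s ^ (-(1:ℝ)/2) * y s :=
          setIntegral_mono_set hint
            (ae_restrict_of_forall_mem measurableSet_Ioc fun s hs =>
              mul_nonneg (rpow_nonneg hs.1.le _) (hpos s hs))
            hsub.eventuallyLE
  calc y (t / 2) / 2 = t ^ (-(1:ℝ)/2) * (t ^ (-(1:ℝ)/2) * y (t / 2) * (t / 2)) := by
        rw [← mul_assoc, ← mul_assoc, rpow_neg_half_mul_rpow_neg_half ht]
        field_simp
    _ ≤ _ := mul_le_mul_of_nonneg_left hhalf (rpow_nonneg ht.le _)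

lemma integrableOn_div_Ioo (ht : 0 < t) (hyt : 0 < y t) (hmono : MonotoneOn y (Ico t 1))
    (hL2 : IntegrableOn (fun s => y s ^ 2 / s) (Ioo t 1)) :
    IntegrableOn (fun s => y s / s) (Ioo t 1) := by
  have hmono' : MonotoneOn y (Ioo t 1) := hmono.mono Ioo_subset_Ico_self
  refine (hL2.div_const (y t)).mono' ((aemeasurable_restrict_of_monotoneOn measurableSet_Ioo
    hmono').div measurable_id.aemeasurable).aestronglyMeasurable ?_
  filter_upwards [ae_restrict_mem measurableSet_Ioo] with s hs
  have hs0 : 0 < s := ht.trans hs.1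
  have hys : y t ≤ y s := hmono ⟨le_rfl, hs.1.trans hs.2⟩ (Ioo_subset_Ico_self hs) hs.1.le
  rw [norm_of_nonneg (div_nonneg (hyt.trans_le hys).le hs0.le), div_right_comm]
  gcongr
  rw [le_div_iff₀ hyt, sq]
  exact mul_le_mul_of_nonneg_left hys (hyt.trans_le hys).le

lemma mul_neg_log_le_integral_div (ht0 : 0 < t) (ht1 : t < 1) (hyt : 0 < y t)
    (hmono : MonotoneOn y (Ico t 1)) (hL2 : IntegrableOn (fun s => y s ^ 2 / s) (Ioo t 1)) :
    y t * -log t ≤ ∫ s in Ioo t 1, y s / s := by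
  have hinv_int : IntegrableOn (fun s => y t * s⁻¹) (Ioo t 1) :=
    ((continuousOn_inv₀.mono fun s hs => (ht0.trans_le hs.1).ne').integrableOn_Icc.mono_set
      Ioo_subset_Icc_self).const_mul _
  have hinv : ∫ s in Ioo t 1, y t * s⁻¹ = y t * -log t := by
    rw [← integral_Ioc_eq_integral_Ioo, ← intervalIntegral.integral_of_le ht1.le,
      intervalIntegral.integral_const_mul, integral_inv_of_pos ht0 one_pos, one_div, log_inv]
  rw [← hinv]
  refine setIntegral_mono_on hinv_int (integrableOn_div_Ioo ht0 hyt hmono hL2) measurableSet_Ioo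
    fun s hs => ?_
  rw [div_eq_mul_inv]
  exact mul_le_mul_of_nonneg_right (hmono ⟨le_rfl, ht1⟩ (Ioo_subset_Ico_self hs) hs.1.le)
    (inv_nonneg.2 (ht0.trans hs.1).le)

lemma quarter_le_psi_mul_T_of_exp_neg_one_le (hpos : ∀ s ∈ Ioo 0 1, 0 ≤ y s)
    (hmono : MonotoneOn y (Ioo 0 1)) (ht : exp (-1) ≤ t) (ht1 : t < 1) :
    y (t / 2) / 4 ≤ psi t * T (fun s => s ^ (-(1:ℝ)/2) * y s) t := by
  have ht0 : 0 < t := (exp_pos _).trans_le ht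
  have hsub : Ioc 0 t ⊆ Ioo 0 1 := Ioc_subset_Ioo_right ht1
  have hfirst := half_le_rpow_neg_half_mul_integral ht0 (fun s hs => hpos s (hsub hs))
    (hmono.mono hsub)
  have hsecond : 0 ≤ ∫ s in Ioo t 1, y s / s := setIntegral_nonneg measurableSet_Ioo fun s hs =>
    div_nonneg (hpos s ⟨ht0.trans hs.1, hs.2⟩) (ht0.trans hs.1).le
  rw [T_rpow_neg_half_mul y ht0.le]
  calc y (t / 2) / 4 = 1 / 2 * (y (t / 2) / 2) := by ring
    _ ≤ _ := mul_le_mul (half_le_psi ht ht1) (le_add_of_le_of_nonneg hfirst hsecond)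
        (div_nonneg (hpos _ ⟨by linarith, by linarith⟩) zero_le_two) (psi_pos ht0 ht1.le).le

lemma half_le_psi_mul_T_of_le_exp_neg_one (hpos : ∀ s ∈ Ioo 0 1, 0 < y s)
    (hmono : MonotoneOn y (Ioo 0 1)) (hL2 : IntegrableOn (fun s => y s ^ 2 / s) (Ioo 0 1))
    (ht0 : 0 < t) (ht : t ≤ exp (-1)) :
    y t / 2 ≤ psi t * T (fun s => s ^ (-(1:ℝ)/2) * y s) t := by
  have ht1 : t < 1 := ht.trans_lt (exp_lt_one_iff.2 (by norm_num))
  have hsub : Ico t 1 ⊆ Ioo 0 1 := Ico_subset_Ioo_left ht0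
  have hsecond := mul_neg_log_le_integral_div ht0 ht1 (hpos t ⟨ht0, ht1⟩) (hmono.mono hsub)
    (hL2.mono_set (Ioo_subset_Ioo_left ht0.le))
  have hfirst : 0 ≤ t ^ (-(1:ℝ)/2) * ∫ s in Ioc 0 t, s ^ (-(1:ℝ)/2) * y s :=
    mul_nonneg (rpow_nonneg ht0.le _) (setIntegral_nonneg measurableSet_Ioc fun s hs =>
      mul_nonneg (rpow_nonneg hs.1.le _) (hpos s (Ioc_subset_Ioo_right ht1 hs)).le)
  rw [T_rpow_neg_half_mul y ht0.le]
  calc y t / 2 = 1 / 2 * y t := by ring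
    _ ≤ psi t * -log t * y t :=
        mul_le_mul_of_nonneg_right (half_le_psi_mul_neg_log ht0 ht) (hpos t ⟨ht0, ht1⟩).le
    _ = psi t * (y t * -log t) := by ring
    _ ≤ _ := mul_le_mul_of_nonneg_left (le_add_of_nonneg_of_le hfirst hsecond)
        (psi_pos ht0 ht1.le).le

end Monotone

/-- If `y ∈ L_2((0,1), dt/t)` is positive and increasing and `x(t) = t^{-1/2} y(t)`,
then `ψ(t)·(Tx)(t) ≥ (1/(4e)) y(t/2)` for all `t ∈ (0,1)`. -/
theorem stmt12 (y : ℝ → ℝ) (hpos : ∀ t ∈ Set.Ioo (0:ℝ) 1, 0 < y t)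
    (hmono : MonotoneOn y (Set.Ioo 0 1))
    (hL2 : IntegrableOn (fun t => y t ^ 2 / t) (Set.Ioo 0 1)) :
    ∀ t ∈ Set.Ioo (0:ℝ) 1,
      (1 / (4 * Real.exp 1)) * y (t / 2)
        ≤ psi t * T (fun s => s ^ (-(1:ℝ)/2) * y s) t := by
  rintro t ⟨ht0, ht1⟩
  have ht2 : t / 2 ∈ Ioo (0:ℝ) 1 := ⟨by linarith, by linarith⟩
  have hquarter : y (t / 2) / 4 ≤ psi t * T (fun s => s ^ (-(1:ℝ)/2) * y s) t := by
    rcases le_total t (exp (-1)) with hsmall | hlarge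
    · refine le_trans ?_ (half_le_psi_mul_T_of_le_exp_neg_one hpos hmono hL2 ht0 hsmall)
      have := hmono ht2 ⟨ht0, ht1⟩ (by linarith)
      linarith [hpos _ ht2]
    · exact quarter_le_psi_mul_T_of_exp_neg_one_le (fun s hs => (hpos s hs).le) hmono hlarge ht1
  calc 1 / (4 * exp 1) * y (t / 2) = y (t / 2) / (4 * exp 1) := one_div_mul_eq_div _ _
    _ ≤ y (t / 2) / 4 :=
        div_le_div_of_nonneg_left (hpos _ ht2).le (by norm_num) (by linarith [add_one_le_exp 1])
    _ ≤ _ := hquarter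
end

section
/- Let N be an Orlicz function (convex, increasing, N(0)=0) such that the Orlicz space L_N(0,1) embeds continuously into the Marcinkiewicz space M_ψ(0,1), where ψ(t) = 1/log(e/t) extended by ψ(t) = t for t ≥ 1. Then there exist constants c, c' > 0 such that N(v) ≥ c·v·log(e + v) for all v > c'; consequently L_N(0,1) ⊂ L_M(0,1) where M(t) = t·log(e + t). -/
open MeasureTheory Set

/-- The Marcinkiewicz norm `‖f‖_{M_ψ} = sup_{0<t≤1} (1/ψ(t)) ∫_0^t μ(s,f) ds` on `(0,1)`. -/
noncomputable def MpsiNorm (f : ℝ → ℝ) : ℝ :=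
  sSup {r : ℝ | ∃ t ∈ Set.Ioc (0:ℝ) 1, r = (∫ s in Set.Ioc (0:ℝ) t, mu f s) / psi t}

/-- Membership in the Orlicz space `L_N(0,1)`. -/
def MemOrlicz (N : ℝ → ℝ) (f : ℝ → ℝ) : Prop :=
  ∃ lam > (0:ℝ), IntegrableOn (fun u => N (|f u| / lam)) (Set.Ioo 0 1)

/-!
Test the embedding on `f = v · χ_(0,t)`. Its decreasing rearrangement is `v · χ_[0,t)`, so
`‖f‖_{M_ψ} ≥ v t (1 - log t)`, while its Orlicz modular is `t N(v)`. Once `N(v) > 1` (which holds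
for `v > c_N`), the choice `t = 1/N(v)` gives `v (1 + log N(v)) ≤ c_N N(v)`. Hence `N(v) ≥ v/c_N`,
so `log N(v) ≥ ½ log v` for large `v`, and `N(v) ≥ v log(e + v) / (2 c_N)`. The inclusion
`L_N ⊆ L_M` follows by dominating `M(w)` by `M(c') + N(w)/c`.
-/

section IndicatorConst

variable {v t : ℝ}

lemma setOf_lt_abs_indicator_const (hv : 0 ≤ v) {a : ℝ} (ha : 0 ≤ a) :
    {u | a < |(Ioo 0 t).indicator (fun _ => v) u|} = if a < v then Ioo 0 t else ∅ := by
  ext u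
  by_cases hu : u ∈ Ioo 0 t <;> split_ifs <;> simp_all [abs_of_nonneg hv, not_lt.2 ha]

lemma nu_setOf_lt_abs_indicator_const (hv : 0 ≤ v) (ht1 : t ≤ 1) {a : ℝ} (ha : 0 ≤ a) :
    nu {u | a < |(Ioo 0 t).indicator (fun _ => v) u|} =
      if a < v then ENNReal.ofReal t else 0 := by
  rw [setOf_lt_abs_indicator_const hv ha]
  split_ifs
  · rw [nu, Measure.restrict_apply measurableSet_Ioo,
      inter_eq_left.2 (Ioo_subset_Ioo_right ht1), Real.volume_Ioo, sub_zero]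
  · simp

lemma mu_indicator_const (hv : 0 < v) (ht : 0 < t) (ht1 : t ≤ 1) :
    mu ((Ioo 0 t).indicator (fun _ => v)) = (Iio t).indicator (fun _ => v) := by
  ext s
  have hmem : ∀ a, (0 ≤ a ∧ nu {u | a < |(Ioo 0 t).indicator (fun _ => v) u|} ≤
      ENNReal.ofReal s) ↔ 0 ≤ a ∧ (a < v → t ≤ s) := fun a =>
    and_congr_right fun ha => by
      rw [nu_setOf_lt_abs_indicator_const hv.le ht1 ha]
      split_ifs with hav <;> simp [hav, ENNReal.ofReal_le_ofReal_iff', ht.not_ge]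
  simp only [mu, hmem]
  by_cases hst : s < t
  · have : {a : ℝ | 0 ≤ a ∧ (a < v → t ≤ s)} = Ici v := by
      ext a
      simp only [mem_ofPred_eq, mem_Ici, hst.not_ge, imp_false, not_lt]
      exact ⟨And.right, fun h => ⟨hv.le.trans h, h⟩⟩
    rw [this, csInf_Ici, indicator_of_mem (mem_Iio.2 hst)]
  · have : {a : ℝ | 0 ≤ a ∧ (a < v → t ≤ s)} = Ici 0 := by
      ext a
      simp [not_lt.1 hst]
    rw [this, csInf_Ici, indicator_of_notMem (notMem_Iio.2 (not_lt.1 hst))]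

lemma setIntegral_mu_indicator_const (hv : 0 < v) (ht : 0 < t) (ht1 : t ≤ 1) {t' : ℝ}
    (ht' : 0 ≤ t') :
    ∫ s in Ioc 0 t', mu ((Ioo 0 t).indicator (fun _ => v)) s = v * min t' t := by
  rw [mu_indicator_const hv ht ht1, setIntegral_indicator measurableSet_Iio,
    setIntegral_const, smul_eq_mul, mul_comm,
    measureReal_congr ((ae_eq_refl (Ioc 0 t')).inter Iio_ae_eq_Iic), Ioc_inter_Iic,
    Real.volume_real_Ioc_of_le (le_min ht' ht.le), sub_zero]

end IndicatorConst

lemma div_psi (x : ℝ) {t : ℝ} (ht : 0 < t) : x / psi t = x * (1 - Real.log t) := by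
  rw [psi, Real.log_div (Real.exp_ne_zero 1) ht.ne', Real.log_exp, div_div_eq_mul_div, div_one]

lemma mul_one_sub_log_le_one {t : ℝ} (ht : 0 < t) : t * (1 - Real.log t) ≤ 1 := by
  have h := Real.log_le_sub_one_of_pos (inv_pos.2 ht)
  rw [Real.log_inv] at h
  nlinarith [mul_inv_cancel₀ ht.ne']

lemma le_MpsiNorm {f : ℝ → ℝ} {B : ℝ}
    (hB : ∀ t ∈ Ioc (0 : ℝ) 1, (∫ s in Ioc 0 t, mu f s) / psi t ≤ B) {t : ℝ}
    (ht : t ∈ Ioc (0 : ℝ) 1) : (∫ s in Ioc 0 t, mu f s) / psi t ≤ MpsiNorm f :=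
  le_csSup ⟨B, by rintro r ⟨t', ht', rfl⟩; exact hB t' ht'⟩ ⟨t, ht, rfl⟩

lemma mul_mul_one_sub_log_le_MpsiNorm_indicator_const {v t : ℝ} (hv : 0 < v) (ht : 0 < t)
    (ht1 : t ≤ 1) :
    v * t * (1 - Real.log t) ≤ MpsiNorm ((Ioo 0 t).indicator (fun _ => v)) := by
  have hB : ∀ t' ∈ Ioc (0 : ℝ) 1,
      (∫ s in Ioc 0 t', mu ((Ioo 0 t).indicator (fun _ => v)) s) / psi t' ≤ v := by
    rintro t' ⟨ht'0, ht'1⟩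
    rw [setIntegral_mu_indicator_const hv ht ht1 ht'0.le, div_psi _ ht'0]
    have hlog : 0 ≤ 1 - Real.log t' := by linarith [Real.log_nonpos ht'0.le ht'1]
    calc v * min t' t * (1 - Real.log t') ≤ v * (t' * (1 - Real.log t')) := by
          rw [← mul_assoc]; gcongr; exact min_le_left _ _
      _ ≤ v * 1 := by gcongr; exact mul_one_sub_log_le_one ht'0
      _ = v := mul_one v
  simpa [setIntegral_mu_indicator_const hv ht ht1 ht.le, div_psi _ ht] using
    le_MpsiNorm hB ⟨ht, ht1⟩

/-- `‖f‖_{M_ψ} ≤ c_N ‖f‖_{L_N}`, phrased through the Luxemburg norm. -/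
def OrliczEmbedsMpsi (N : ℝ → ℝ) (cN : ℝ) : Prop :=
  ∀ f : ℝ → ℝ, Measurable f → ∀ lam : ℝ, 0 < lam →
    IntegrableOn (fun u => N (|f u| / lam)) (Ioo 0 1) →
    (∫ u in Ioo (0:ℝ) 1, N (|f u| / lam)) ≤ 1 → MpsiNorm f ≤ cN * lam

namespace OrliczEmbedsMpsi

variable {N : ℝ → ℝ} {cN v : ℝ}

lemma mul_mul_one_sub_log_le (hemb : OrliczEmbedsMpsi N cN) (hN0 : N 0 = 0) (hv : 0 < v)
    {t : ℝ} (ht : 0 < t) (ht1 : t ≤ 1) (htN : t * N v ≤ 1) :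
    v * t * (1 - Real.log t) ≤ cN := by
  set f := (Ioo 0 t).indicator (fun _ => v)
  have hfN : (fun u => N (|f u| / 1)) = (Ioo 0 t).indicator (fun _ => N v) := by
    funext u
    by_cases hu : u ∈ Ioo 0 t <;> simp [f, hu, abs_of_pos hv, hN0]
  have hint : IntegrableOn (fun u => N (|f u| / 1)) (Ioo 0 1) := by
    rw [hfN]
    exact (integrableOn_const measure_Ioo_lt_top.ne).indicator measurableSet_Ioo
  have hmodular : ∫ u in Ioo (0:ℝ) 1, N (|f u| / 1) = t * N v := by
    rw [hfN, setIntegral_indicator measurableSet_Ioo, setIntegral_const,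
      inter_eq_right.2 (Ioo_subset_Ioo_right ht1), Real.volume_real_Ioo_of_le ht.le, sub_zero,
      smul_eq_mul]
  calc v * t * (1 - Real.log t) ≤ MpsiNorm f :=
        mul_mul_one_sub_log_le_MpsiNorm_indicator_const hv ht ht1
    _ ≤ cN * 1 :=
        hemb f (measurable_const.indicator measurableSet_Ioo) 1 one_pos hint (hmodular ▸ htN)
    _ = cN := mul_one cN

lemma one_lt_of_lt (hemb : OrliczEmbedsMpsi N cN) (hN0 : N 0 = 0) (hcN : 0 < cN) (hv : cN < v) :
    1 < N v := by
  by_contra! hN1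
  have h := hemb.mul_mul_one_sub_log_le hN0 (hcN.trans hv) one_pos le_rfl (by rwa [one_mul])
  rw [Real.log_one, sub_zero, mul_one, mul_one] at h
  exact h.not_gt hv

lemma mul_one_add_log_le (hemb : OrliczEmbedsMpsi N cN) (hN0 : N 0 = 0) (hcN : 0 < cN)
    (hv : cN < v) : v * (1 + Real.log (N v)) ≤ cN * N v := by
  have hN1 := hemb.one_lt_of_lt hN0 hcN hv
  have hNpos : 0 < N v := one_pos.trans hN1
  have h := hemb.mul_mul_one_sub_log_le hN0 (hcN.trans hv) (inv_pos.2 hNpos)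
    (inv_le_one_of_one_le₀ hN1.le) (by rw [inv_mul_cancel₀ hNpos.ne'])
  rw [Real.log_inv, sub_neg_eq_add] at h
  calc v * (1 + Real.log (N v)) = v * (N v)⁻¹ * (1 + Real.log (N v)) * N v := by
        field_simp
    _ ≤ cN * N v := by gcongr

end OrliczEmbedsMpsi

lemma one_le_log_exp_add {w : ℝ} (hw : 0 ≤ w) : 1 ≤ Real.log (Real.exp 1 + w) := by
  rw [Real.le_log_iff_exp_le (by positivity)]
  linarith

lemma mul_log_exp_add_le_of_mul_one_add_log_le {a v y : ℝ} (ha : 0 < a)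
    (hev : Real.exp 1 ≤ v) (hav : a ^ 2 ≤ v) (hy : 1 ≤ y)
    (h : v * (1 + Real.log y) ≤ a * y) : v * Real.log (Real.exp 1 + v) ≤ 2 * a * y := by
  have he : 2 ≤ Real.exp 1 := by linarith [Real.add_one_le_exp 1]
  have hv : 0 < v := by linarith
  have hy0 : 0 < y := by linarith
  have hlin : v ≤ a * y := by nlinarith [Real.log_nonneg hy]
  have hlogv : Real.log v ≤ Real.log a + Real.log y := by
    rw [← Real.log_mul ha.ne' hy0.ne']
    exact Real.log_le_log hv hlin
  have hloga : 2 * Real.log a ≤ Real.log v := by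
    have := Real.log_le_log (by positivity) hav
    rwa [Real.log_pow, Nat.cast_ofNat] at this
  have hlogev : Real.log (Real.exp 1 + v) ≤ 1 + Real.log v := by
    rw [← Real.log_exp 1, ← Real.log_mul (Real.exp_ne_zero 1) hv.ne', Real.log_exp]
    exact Real.log_le_log (by positivity) (by nlinarith)
  calc v * Real.log (Real.exp 1 + v) ≤ v * (2 * (1 + Real.log y)) := by gcongr; linarith
    _ = 2 * (v * (1 + Real.log y)) := by ring
    _ ≤ 2 * (a * y) := by gcongr
    _ = 2 * a * y := by ring

lemma OrliczEmbedsMpsi.exists_mul_log_le {N : ℝ → ℝ} {cN : ℝ} (hemb : OrliczEmbedsMpsi N cN)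
    (hN0 : N 0 = 0) (hcN : 0 < cN) :
    ∃ c > (0:ℝ), ∃ c' > (0:ℝ), ∀ v : ℝ, c' < v →
      c * (v * Real.log (Real.exp 1 + v)) ≤ N v := by
  refine ⟨(2 * cN)⁻¹, by positivity, Real.exp 1 + cN + cN ^ 2, by positivity, fun v hv => ?_⟩
  have hvcN : cN < v := by nlinarith [Real.exp_pos 1]
  rw [inv_mul_le_iff₀ (by positivity)]
  exact mul_log_exp_add_le_of_mul_one_add_log_le hcN (by nlinarith) (by nlinarith [Real.exp_pos 1])
    (hemb.one_lt_of_lt hN0 hcN hvcN).le (hemb.mul_one_add_log_le hN0 hcN hvcN)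

lemma mul_log_exp_add_le_add {N : ℝ → ℝ} {c c' w : ℝ} (hc : 0 < c) (hc' : 0 ≤ c')
    (hbound : ∀ v : ℝ, c' < v → c * (v * Real.log (Real.exp 1 + v)) ≤ N v)
    (hw : 0 ≤ w) (hNw : 0 ≤ N w) :
    w * Real.log (Real.exp 1 + w) ≤ c' * Real.log (Real.exp 1 + c') + c⁻¹ * N w := by
  rcases le_or_gt w c' with hwc | hwc
  · have hmono : w * Real.log (Real.exp 1 + w) ≤ c' * Real.log (Real.exp 1 + c') :=
      mul_le_mul hwc (Real.log_le_log (by positivity) (by linarith))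
        (by linarith [one_le_log_exp_add hw]) hc'
    have : 0 ≤ c⁻¹ * N w := by positivity
    linarith
  · have : w * Real.log (Real.exp 1 + w) ≤ c⁻¹ * N w := by
      rw [le_inv_mul_iff₀ hc]
      exact hbound w hwc
    nlinarith [one_le_log_exp_add hc']

lemma MemOrlicz.of_le_add_mul {N M : ℝ → ℝ} (hM : Measurable M) {C K : ℝ}
    (hM0 : ∀ w, 0 ≤ w → 0 ≤ M w) (hMN : ∀ w, 0 ≤ w → M w ≤ C + K * N w) {f : ℝ → ℝ}
    (hf : Measurable f) (h : MemOrlicz N f) : MemOrlicz M f := by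
  obtain ⟨lam, hlam, hint⟩ := h
  refine ⟨lam, hlam, Integrable.mono' ((integrableOn_const measure_Ioo_lt_top.ne).add
    (hint.const_mul K)) (hM.comp (hf.abs.div_const lam)).aestronglyMeasurable
    (ae_of_all _ fun u => ?_)⟩
  have hu : 0 ≤ |f u| / lam := by positivity
  rw [Real.norm_of_nonneg (hM0 _ hu)]
  exact hMN _ hu

theorem stmt17_general (N : ℝ → ℝ)
    (hmono : MonotoneOn N (Set.Ici 0)) (hN0 : N 0 = 0)
    (hembed : ∃ cN > (0:ℝ), ∀ f : ℝ → ℝ, Measurable f → ∀ lam : ℝ, 0 < lam →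
      IntegrableOn (fun u => N (|f u| / lam)) (Set.Ioo 0 1) →
      (∫ u in Set.Ioo (0:ℝ) 1, N (|f u| / lam)) ≤ 1 → MpsiNorm f ≤ cN * lam) :
    (∃ c > (0:ℝ), ∃ c' > (0:ℝ), ∀ v : ℝ, c' < v →
        c * (v * Real.log (Real.exp 1 + v)) ≤ N v) ∧
    ∀ f : ℝ → ℝ, Measurable f → MemOrlicz N f →
      MemOrlicz (fun t => t * Real.log (Real.exp 1 + t)) f := by
  obtain ⟨cN, hcN, hemb⟩ := hembed
  obtain ⟨c, hc, c', hc', hbound⟩ := OrliczEmbedsMpsi.exists_mul_log_le hemb hN0 hcN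
  have hpointwise : ∀ w, 0 ≤ w →
      w * Real.log (Real.exp 1 + w) ≤ c' * Real.log (Real.exp 1 + c') + c⁻¹ * N w :=
    fun w hw => mul_log_exp_add_le_add hc hc'.le hbound hw (hN0 ▸ hmono self_mem_Ici hw hw)
  exact ⟨⟨c, hc, c', hc', hbound⟩, fun f hf hNf => hNf.of_le_add_mul (by fun_prop)
    (fun w hw => mul_nonneg hw (zero_le_one.trans (one_le_log_exp_add hw))) hpointwise hf⟩

/-- If `N` is an Orlicz function such that `L_N(0,1)` embeds continuously into the
Marcinkiewicz space `M_ψ(0,1)` (`‖f‖_{M_ψ} ≤ c_N ‖f‖_{L_N}`, expressed via the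
Luxemburg norm: `∫_0^1 N(|f|/λ) ≤ 1` implies `‖f‖_{M_ψ} ≤ c_N λ`), then
`N(v) ≥ c·v·log(e+v)` for all `v` beyond some `c'`; consequently
`L_N(0,1) ⊆ L_M(0,1)` where `M(t) = t·log(e+t)`. -/
theorem stmt17 (N : ℝ → ℝ) (hconv : ConvexOn ℝ (Set.Ici 0) N)
    (hmono : MonotoneOn N (Set.Ici 0)) (hN0 : N 0 = 0)
    (hembed : ∃ cN > (0:ℝ), ∀ f : ℝ → ℝ, Measurable f → ∀ lam : ℝ, 0 < lam →
      IntegrableOn (fun u => N (|f u| / lam)) (Set.Ioo 0 1) →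
      (∫ u in Set.Ioo (0:ℝ) 1, N (|f u| / lam)) ≤ 1 → MpsiNorm f ≤ cN * lam) :
    (∃ c > (0:ℝ), ∃ c' > (0:ℝ), ∀ v : ℝ, c' < v →
        c * (v * Real.log (Real.exp 1 + v)) ≤ N v) ∧
    ∀ f : ℝ → ℝ, Measurable f → MemOrlicz N f →
      MemOrlicz (fun t => t * Real.log (Real.exp 1 + t)) f :=
  stmt17_general N hmono hN0 hembed
end
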